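/- Let Γ be a finite connected graph with no separating edge. For every edge e of Γ, the set Sₑ := E(Γ∖e)_sep ∪ {e} (the separating edges of Γ with e removed, together with e itself) is the unique C1-set of Γ containing e. -/

import Mathlib

/-! Basic theory of finite multigraphs (loops and multiple edges allowed),
following Caporaso–Viviani, "Torelli theorem for graphs and tropical curves". -/

noncomputable section

open scoped Classical

/-- A finite multigraph: finite types of vertices and edges, each edge having two
(possibly equal) endpoints `fst e` and `snd e`. -/
structure Multigraph where
  V : Type
  E : Type
  [fintV : Fintype V]
  [fintE : Fintype E]
  fst : E → V
  snd : E → V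

namespace Multigraph

attribute [instance] Multigraph.fintV Multigraph.fintE

variable (G : Multigraph)

/-- Two vertices are adjacent if some edge joins them. -/
def Adj (v w : G.V) : Prop :=
  ∃ e : G.E, (G.fst e = v ∧ G.snd e = w) ∨ (G.fst e = w ∧ G.snd e = v)

/-- Reachability by walks. -/
def Reachable (v w : G.V) : Prop := Relation.ReflTransGen G.Adj v w

def Preconnected : Prop := ∀ v w : G.V, G.Reachable v w

def Connected : Prop := Nonempty G.V ∧ G.Preconnected

/-- The number of connected components. -/
def numComponents : ℕ := Nat.card (Quot G.Adj)

/-- The first Betti number `b₁ = c - #V + #E`. -/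
def b1 : ℤ := (G.numComponents : ℤ) + (Nat.card G.E : ℤ) - (Nat.card G.V : ℤ)

/-- The spanning subgraph `Γ∖S` obtained by deleting the edges in `S`. -/
def deleteEdges (S : Set G.E) : Multigraph :=
  { V := G.V
    E := {e : G.E // e ∉ S}
    fst := fun e => G.fst e.1
    snd := fun e => G.snd e.1
    fintV := G.fintV
    fintE := Fintype.ofFinite _ }

/-- The subgraph spanned by a set of edges: its vertices are the incident vertices. -/
def restrict (S : Set G.E) : Multigraph :=
  { V := {v : G.V // ∃ e ∈ S, G.fst e = v ∨ G.snd e = v}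
    E := ↥S
    fst := fun e => ⟨G.fst e.1, e.1, e.2, Or.inl rfl⟩
    snd := fun e => ⟨G.snd e.1, e.1, e.2, Or.inr rfl⟩
    fintV := Fintype.ofFinite _
    fintE := Fintype.ofFinite _ }

/-- The graph `Γ(S)` obtained by contracting all the edges *not* in `S`; its vertices
are the connected components of `Γ∖S` and its edges are the elements of `S`. -/
def contractCompl (S : Set G.E) : Multigraph :=
  { V := Quot (G.deleteEdges S).Adj
    E := ↥S
    fst := fun e => Quot.mk _ (G.fst e.1)
    snd := fun e => Quot.mk _ (G.snd e.1)
    fintV := Fintype.ofFinite _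
    fintE := Fintype.ofFinite _ }

/-- An edge is separating if its endpoints are no longer joined after deleting it. -/
def IsSeparating (e : G.E) : Prop :=
  ¬ (G.deleteEdges {e}).Reachable (G.fst e) (G.snd e)

/-- The set of separating edges. -/
def sepEdges : Set G.E := {e | G.IsSeparating e}

/-- The graph with its isolated vertices removed. -/
def core : Multigraph := G.restrict Set.univ

/-- A cycle: a connected graph, free from separating edges, with `b₁ = 1`. -/
def IsCycleGraph : Prop := G.Connected ∧ G.sepEdges = ∅ ∧ G.b1 = 1

/-- `S` is (the edge set of) a cycle subgraph of `G`. -/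
def IsCycleSet (S : Set G.E) : Prop := (G.restrict S).IsCycleGraph

/-- `S` is a C1-set of `G`: writing `Γ̃ = Γ∖E(Γ)_sep`, the set `S` consists of
non-separating edges, the contraction `Γ̃(S)` (with isolated vertices removed) is a
cycle, and `Γ̃∖S` has no separating edges.  (Equivalently, `S` is a C1-set of the
connected component of `Γ̃` containing it.) -/
def IsC1 (S : Set G.E) : Prop :=
  (∀ e ∈ S, ¬ G.IsSeparating e) ∧
  (((G.deleteEdges G.sepEdges).contractCompl {e | e.1 ∈ S}).core).IsCycleGraph ∧
  ((G.deleteEdges G.sepEdges).deleteEdges {e | e.1 ∈ S}).sepEdges = ∅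

/-! ### Orientations -/

/-- An orientation is encoded by a map `E → Bool`; `src` is the source of an edge. -/
def src (o : G.E → Bool) (e : G.E) : G.V := if o e then G.fst e else G.snd e

/-- The target of an edge under the orientation `o`. -/
def tgt (o : G.E → Bool) (e : G.E) : G.V := if o e then G.snd e else G.fst e

/-- An orientation is totally cyclic if there is no nonempty set of vertices `W`,
whose complement meets the component of a vertex of `W`, such that all edges between
`W` and its complement go in the same direction. -/
def IsTotallyCyclic (o : G.E → Bool) : Prop :=
  ∀ W : Set G.V, W.Nonempty →
    (∃ v ∈ W, ∃ w, w ∉ W ∧ G.Reachable v w) →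
    (∃ e, G.src o e ∈ W ∧ G.tgt o e ∉ W) ∧ (∃ e, G.tgt o e ∈ W ∧ G.src o e ∉ W)

/-- Directed reachability with respect to an orientation. -/
def DReachable (o : G.E → Bool) (v w : G.V) : Prop :=
  Relation.ReflTransGen (fun a b => ∃ e, G.src o e = a ∧ G.tgt o e = b) v w

/-! ### Homology -/

/-- Incidence of an oriented edge on a vertex: `(tgt e = v) - (src e = v)`. -/
def inc (o : G.E → Bool) (e : G.E) (v : G.V) : ℤ :=
  (if G.tgt o e = v then 1 else 0) - (if G.src o e = v then 1 else 0)

/-- `H₁(Γ,ℤ)`: the kernel of the boundary map `C₁(Γ,ℤ) → C₀(Γ,ℤ)`. -/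
def cycleSpace (o : G.E → Bool) : Submodule ℤ (G.E → ℤ) where
  carrier := {f | ∀ v, ∑ e, f e * G.inc o e v = 0}
  zero_mem' := by intro v; simp
  add_mem' := by
    intro f g hf hg v
    simp only [Set.mem_setOf_eq] at hf hg
    simp [add_mul, Finset.sum_add_distrib, hf v, hg v]
  smul_mem' := by
    intro c f hf v
    simp only [Set.mem_setOf_eq] at hf
    simp [smul_eq_mul, mul_assoc, ← Finset.mul_sum, hf v]

/-- Real incidence. -/
def incR (o : G.E → Bool) (e : G.E) (v : G.V) : ℝ := (G.inc o e v : ℝ)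

/-- `H₁(Γ,ℝ)`: the kernel of the boundary map `C₁(Γ,ℝ) → C₀(Γ,ℝ)`. -/
def cycleSpaceR (o : G.E → Bool) : Submodule ℝ (G.E → ℝ) where
  carrier := {f | ∀ v, ∑ e, f e * G.incR o e v = 0}
  zero_mem' := by intro v; simp
  add_mem' := by
    intro f g hf hg v
    simp only [Set.mem_setOf_eq] at hf hg
    simp [add_mul, Finset.sum_add_distrib, hf v, hg v]
  smul_mem' := by
    intro c f hf v
    simp only [Set.mem_setOf_eq] at hf
    simp [smul_eq_mul, mul_assoc, ← Finset.mul_sum, hf v]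

/-- The indicator chain of a set of edges. -/
def indicator (S : Set G.E) : G.E → ℤ := fun e => if e ∈ S then 1 else 0

/-- `S` is a cyclically oriented cycle of `G` for the orientation `o`: `S` is a cycle
and its indicator chain is a homology class (each vertex of the cycle has one ingoing
and one outgoing edge of `S`). -/
def IsCyclicallyOriented (o : G.E → Bool) (S : Set G.E) : Prop :=
  G.IsCycleSet S ∧ G.indicator S ∈ G.cycleSpace o

/-- The coordinate functional `e*` restricted to `H₁(Γ,ℝ)`. -/
def edgeFunR (o : G.E → Bool) (e : G.E) : Module.Dual ℝ ↥(G.cycleSpaceR o) :=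
  (LinearMap.proj e).comp (G.cycleSpaceR o).subtype

/-! ### Connectivity and regularity -/

/-- The degree (valence) of a vertex; loops count twice. -/
def degree (v : G.V) : ℕ :=
  Nat.card {e : G.E // G.fst e = v} + Nat.card {e : G.E // G.snd e = v}

/-- A graph is 3-regular if every vertex has valence 3. -/
def ThreeRegular : Prop := ∀ v : G.V, G.degree v = 3

/-- Deletion of a set of vertices, together with all incident edges. -/
def deleteVerts (W : Set G.V) : Multigraph :=
  { V := {v : G.V // v ∉ W}
    E := {e : G.E // G.fst e ∉ W ∧ G.snd e ∉ W}
    fst := fun e => ⟨G.fst e.1, e.2.1⟩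
    snd := fun e => ⟨G.snd e.1, e.2.2⟩
    fintV := Fintype.ofFinite _
    fintE := Fintype.ofFinite _ }

/-- 3-edge connectivity: removing any 2 edges leaves the graph connected. -/
def EdgeConnected3 : Prop :=
  Nonempty G.V ∧ ∀ F : Set G.E, Nat.card F ≤ 2 → (G.deleteEdges F).Preconnected

/-- 3-connectivity: removing any 2 vertices (with incident edges) leaves the graph
connected. -/
def Connected3 : Prop :=
  Nonempty G.V ∧ ∀ W : Set G.V, Nat.card W ≤ 2 → (G.deleteVerts W).Preconnected

/-- Isomorphism of multigraphs. -/
def IsIsoTo (G H : Multigraph) : Prop :=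
  ∃ (fV : G.V ≃ H.V) (fE : G.E ≃ H.E), ∀ e : G.E,
    (H.fst (fE e) = fV (G.fst e) ∧ H.snd (fE e) = fV (G.snd e)) ∨
    (H.fst (fE e) = fV (G.snd e) ∧ H.snd (fE e) = fV (G.fst e))

/-- A bijection of edge sets is cyclic if it induces a bijection between cycles. -/
def IsCyclicBijection (G G' : Multigraph) (ε : G.E ≃ G'.E) : Prop :=
  ∀ S : Set G.E, G.IsCycleSet S ↔ G'.IsCycleSet (⇑ε '' S)

/-- Two orientations are equal as orientations (encodings may differ on loops). -/
def OrientEq (o₁ o₂ : G.E → Bool) : Prop :=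
  ∀ e : G.E, G.src o₁ e = G.src o₂ e ∧ G.tgt o₁ e = G.tgt o₂ e

/-- `o` is an orientation of `G` extending the orientation `φ` of `Γ∖T`. -/
def ExtendsOrient (T : Set G.E) (φ : (G.deleteEdges T).E → Bool) (o : G.E → Bool) : Prop :=
  ∀ e : (G.deleteEdges T).E,
    G.src o e.1 = (G.deleteEdges T).src φ e ∧ G.tgt o e.1 = (G.deleteEdges T).tgt φ e

-- ### Auxiliary framework for the proof
section Framework
variable {G}

def Joins (g : G.E) (v w : G.V) : Prop :=
  (G.fst g = v ∧ G.snd g = w) ∨ (G.fst g = w ∧ G.snd g = v)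

theorem Joins.symm {g : G.E} {v w : G.V} (h : G.Joins g v w) : G.Joins g w v := Or.symm h

def Rel (G : Multigraph) (B : Set G.E) (v w : G.V) : Prop := ∃ g, g ∉ B ∧ G.Joins g v w

theorem Rel.symm {B : Set G.E} {v w : G.V} (h : G.Rel B v w) : G.Rel B w v := by
  obtain ⟨g, hg, hj⟩ := h; exact ⟨g, hg, hj.symm⟩

theorem rel_symmetric (G : Multigraph) (B : Set G.E) : Symmetric (G.Rel B) :=
  fun _ _ h => h.symm

def Reach (G : Multigraph) (B : Set G.E) : G.V → G.V → Prop :=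
  Relation.ReflTransGen (G.Rel B)

theorem Reach.symm {B : Set G.E} {v w : G.V} (h : G.Reach B v w) : G.Reach B w v :=
  (@Relation.ReflTransGen.stdSymm _ _ ⟨fun a b hab => rel_symmetric G B hab⟩).symm _ _ h

theorem reach_mono {B B' : Set G.E} (hBB : B ⊆ B') {v w : G.V}
    (h : G.Reach B' v w) : G.Reach B v w :=
  Relation.ReflTransGen.mono (r := G.Rel B') (p := G.Rel B) (fun _ _ ⟨g, hg, hj⟩ => ⟨g, fun hh => hg (hBB hh), hj⟩) _ _ h

theorem rtg_congr {α : Type*} {r s : α → α → Prop} (h : ∀ v w, r v w ↔ s v w) {v w : α} :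
    Relation.ReflTransGen r v w ↔ Relation.ReflTransGen s v w := by
  constructor
  · exact Relation.ReflTransGen.mono (r := r) (p := s) (fun a b => (h a b).mp) v w
  · exact Relation.ReflTransGen.mono (r := s) (p := r) (fun a b => (h a b).mpr) v w


theorem adj_deleteEdges {B : Set G.E} {v w : G.V} :
    (G.deleteEdges B).Adj v w ↔ G.Rel B v w := by
  constructor
  · rintro ⟨⟨g, hg⟩, hj⟩; exact ⟨g, hg, hj⟩
  · rintro ⟨g, hg, hj⟩; exact ⟨⟨g, hg⟩, hj⟩

theorem reachable_deleteEdges {B : Set G.E} {v w : G.V} :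
    (G.deleteEdges B).Reachable v w ↔ G.Reach B v w :=
  rtg_congr (fun _ _ => adj_deleteEdges)

theorem isSeparating_iff {g : G.E} :
    G.IsSeparating g ↔ ¬ G.Reach {g} (G.fst g) (G.snd g) := by
  unfold IsSeparating
  rw [reachable_deleteEdges]

theorem sepEdges_empty_iff :
    G.sepEdges = ∅ ↔ ∀ g : G.E, G.Reach {g} (G.fst g) (G.snd g) := by
  simp only [Set.eq_empty_iff_forall_notMem, sepEdges, Set.mem_setOf_eq, isSeparating_iff,
    not_not]

-- rel of a second deletion
theorem rel_deleteEdges_setOf {B T : Set G.E} {v w : G.V} :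
    (G.deleteEdges B).Rel {x | x.1 ∈ T} v w ↔ G.Rel (B ∪ T) v w := by
  constructor
  · rintro ⟨⟨g, hg⟩, hgT, hj⟩
    exact ⟨g, by simp only [Set.mem_union]; rintro (h|h); exacts [hg h, hgT h], hj⟩
  · rintro ⟨g, hg, hj⟩
    simp only [Set.mem_union, not_or] at hg
    exact ⟨⟨g, hg.1⟩, hg.2, hj⟩

theorem reach_deleteEdges_setOf {B T : Set G.E} {v w : G.V} :
    (G.deleteEdges B).Reach {x | x.1 ∈ T} v w ↔ G.Reach (B ∪ T) v w :=
  rtg_congr (fun _ _ => rel_deleteEdges_setOf)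

theorem singleton_subtype_eq {B : Set G.E} (x : (G.deleteEdges B).E) :
    ({x} : Set (G.deleteEdges B).E) = {y | y.1 ∈ ({x.1} : Set G.E)} := by
  ext y
  simp only [Set.mem_singleton_iff, Set.mem_setOf_eq]
  exact Subtype.ext_iff

theorem isSeparating_deleteEdges {B : Set G.E} (x : (G.deleteEdges B).E) :
    (G.deleteEdges B).IsSeparating x ↔
      ¬ G.Reach (insert x.1 B) (G.fst x.1) (G.snd x.1) := by
  rw [isSeparating_iff, singleton_subtype_eq, ← Set.union_singleton]
  exact not_congr reach_deleteEdges_setOf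

theorem sepEdges_deleteEdges_empty_iff {B : Set G.E} :
    (G.deleteEdges B).sepEdges = ∅ ↔
      ∀ g : G.E, g ∉ B → G.Reach (insert g B) (G.fst g) (G.snd g) := by
  rw [Set.eq_empty_iff_forall_notMem]
  constructor
  · intro h g hg
    by_contra hc
    exact h ⟨g, hg⟩ ((isSeparating_deleteEdges ⟨g, hg⟩).mpr hc)
  · intro h x hx
    exact (isSeparating_deleteEdges x).mp hx (h x.1 x.2)

def comp (G : Multigraph) (B : Set G.E) : ℕ := Nat.card (Quot (G.Rel B))

theorem quot_mk_eq_of_rtg {α : Type*} {r : α → α → Prop} {v w : α}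
    (h : Relation.ReflTransGen r v w) : Quot.mk r v = Quot.mk r w := by
  induction h with
  | refl => rfl
  | tail _ h ih => exact ih.trans (Quot.sound h)

theorem rtg_of_eqvGen {α : Type*} {r : α → α → Prop} (hs : Symmetric r) {v w : α}
    (h : Relation.EqvGen r v w) : Relation.ReflTransGen r v w := by
  induction h with
  | rel a b h => exact Relation.ReflTransGen.single h
  | refl => exact Relation.ReflTransGen.refl
  | symm a b _ ih => exact (@Relation.ReflTransGen.stdSymm _ _ ⟨fun a b hab => hs hab⟩).symm _ _ ih
  | trans a b c _ _ ih1 ih2 => exact ih1.trans ih2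

theorem mk_eq_iff_reach {B : Set G.E} {v w : G.V} :
    Quot.mk (G.Rel B) v = Quot.mk (G.Rel B) w ↔ G.Reach B v w := by
  constructor
  · intro h
    exact rtg_of_eqvGen (rel_symmetric G B) (Quot.eq.mp h)
  · exact quot_mk_eq_of_rtg

theorem card_quot_eq {α : Type*} (r s : α → α → Prop)
    (h1 : ∀ v w, r v w → Quot.mk s v = Quot.mk s w)
    (h2 : ∀ v w, s v w → Quot.mk r v = Quot.mk r w) :
    Nat.card (Quot r) = Nat.card (Quot s) :=
  Nat.card_congr
    { toFun := Quot.lift (Quot.mk s) h1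
      invFun := Quot.lift (Quot.mk r) h2
      left_inv := by intro q; induction q using Quot.ind; rfl
      right_inv := by intro q; induction q using Quot.ind; rfl }

theorem numComponents_deleteEdges {B : Set G.E} :
    (G.deleteEdges B).numComponents = G.comp B :=
  card_quot_eq _ _
    (fun v w h => Quot.sound (adj_deleteEdges.mp h))
    (fun v w h => Quot.sound (adj_deleteEdges.mpr h))

theorem numComponents_eq_comp_empty : G.numComponents = G.comp ∅ :=
  card_quot_eq _ _
    (fun v w ⟨g, h⟩ => Quot.sound ⟨g, Set.notMem_empty g, h⟩)
    (fun v w ⟨g, _, h⟩ => Quot.sound ⟨g, h⟩)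

theorem comp_insert_of_reach {B : Set G.E} {g : G.E}
    (h : G.Reach (insert g B) (G.fst g) (G.snd g)) :
    G.comp (insert g B) = G.comp B := by
  apply card_quot_eq
  · intro v w hr
    exact Quot.sound ⟨hr.choose, fun hh => hr.choose_spec.1 (Set.mem_insert_of_mem g hh),
      hr.choose_spec.2⟩
  · rintro v w ⟨g', hg', hj⟩
    by_cases hgg : g' = g
    · subst hgg
      rcases hj with ⟨h1, h2⟩ | ⟨h1, h2⟩
      · rw [← h1, ← h2]; exact mk_eq_iff_reach.mpr h
      · rw [← h1, ← h2]; exact (mk_eq_iff_reach.mpr h).symm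
    · exact Quot.sound ⟨g', by simp [hg', hgg], hj⟩

theorem reach_split {B : Set G.E} {g : G.E} {v w : G.V}
    (h : G.Reach B v w) :
    G.Reach (insert g B) v w ∨
      (G.Reach (insert g B) v (G.fst g) ∧ G.Reach (insert g B) (G.snd g) w) ∨
      (G.Reach (insert g B) v (G.snd g) ∧ G.Reach (insert g B) (G.fst g) w) := by
  induction h with
  | refl => exact Or.inl Relation.ReflTransGen.refl
  | @tail x w hvx hxw ih =>
    obtain ⟨g', hg', hj⟩ := hxw
    by_cases hgg : g' = g
    · subst hgg
      rcases hj with ⟨h1, h2⟩ | ⟨h1, h2⟩ <;> subst h1 <;> subst h2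
      · rcases ih with h | ⟨h3, h4⟩ | ⟨h3, h4⟩
        · exact Or.inr (Or.inl ⟨h, Relation.ReflTransGen.refl⟩)
        · exact Or.inr (Or.inl ⟨h3, Relation.ReflTransGen.refl⟩)
        · exact Or.inl h3
      · rcases ih with h | ⟨h3, h4⟩ | ⟨h3, h4⟩
        · exact Or.inr (Or.inr ⟨h, Relation.ReflTransGen.refl⟩)
        · exact Or.inl h3
        · exact Or.inr (Or.inr ⟨h3, Relation.ReflTransGen.refl⟩)
    · have hstep : G.Rel (insert g B) x w := ⟨g', by simp [hg', hgg], hj⟩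
      rcases ih with h | ⟨h3, h4⟩ | ⟨h3, h4⟩
      · exact Or.inl (h.tail hstep)
      · exact Or.inr (Or.inl ⟨h3, h4.tail hstep⟩)
      · exact Or.inr (Or.inr ⟨h3, h4.tail hstep⟩)

theorem comp_insert_of_not_reach {B : Set G.E} {g : G.E} (hgB : g ∉ B)
    (hsep : ¬ G.Reach (insert g B) (G.fst g) (G.snd g)) :
    G.comp (insert g B) = G.comp B + 1 := by
  classical
  set B' := insert g B with hB'
  set a := G.fst g
  set b := G.snd g
  have hab : ¬ G.Reach B' a b := hsep
  set β : Quot (G.Rel B') := Quot.mk _ b with hβ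
  -- the map from components of G∖B' to components of G∖B
  have hmap : ∀ v w, G.Rel B' v w → Quot.mk (G.Rel B) v = Quot.mk (G.Rel B) w := by
    rintro v w ⟨g', hg', hj⟩
    exact Quot.sound ⟨g', fun hh => hg' (Set.mem_insert_of_mem _ hh), hj⟩
  set π : Quot (G.Rel B') → Quot (G.Rel B) := Quot.lift (Quot.mk (G.Rel B)) hmap with hπ
  -- the restriction of π to the complement of β is a bijection
  have hrab : G.Rel B a b := ⟨g, hgB, Or.inl ⟨rfl, rfl⟩⟩
  have hbij : Function.Bijective (fun c : {c : Quot (G.Rel B') // ¬ c = β} => π c.1) := by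
    constructor
    · rintro ⟨c, hc⟩ ⟨d, hd⟩ h
      obtain ⟨v, rfl⟩ := Quot.exists_rep c
      obtain ⟨w, rfl⟩ := Quot.exists_rep d
      simp only [hπ] at h
      have hr : G.Reach B v w := mk_eq_iff_reach.mp h
      rcases reach_split (g := g) hr with h1 | ⟨h1, h2⟩ | ⟨h1, h2⟩
      · exact Subtype.ext (mk_eq_iff_reach.mpr h1)
      · exact absurd (mk_eq_iff_reach.mpr h2.symm) hd
      · exact absurd (mk_eq_iff_reach.mpr h1) hc
    · intro c
      obtain ⟨v, rfl⟩ := Quot.exists_rep c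
      by_cases hv : Quot.mk (G.Rel B') v = β
      · refine ⟨⟨Quot.mk (G.Rel B') a, fun hc => hab (mk_eq_iff_reach.mp hc)⟩, ?_⟩
        have : G.Reach B' v b := mk_eq_iff_reach.mp hv
        simp only [hπ]
        refine (mk_eq_iff_reach.mpr ?_ : Quot.mk (G.Rel B) a = Quot.mk (G.Rel B) v)
        exact (Relation.ReflTransGen.single hrab).trans
          (reach_mono (Set.subset_insert g B) this).symm
      · exact ⟨⟨Quot.mk (G.Rel B') v, hv⟩, rfl⟩
  have hcard1 : G.comp B = Nat.card {c : Quot (G.Rel B') // ¬ c = β} :=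
    (Nat.card_congr (Equiv.ofBijective _ hbij)).symm
  have hcard2 : G.comp B' = Nat.card {c : Quot (G.Rel B') // c = β} +
      Nat.card {c : Quot (G.Rel B') // ¬ c = β} := by
    rw [comp, ← Nat.card_sum, Nat.card_congr (Equiv.sumCompl (· = β))]
  have hone : Nat.card {c : Quot (G.Rel B') // c = β} = 1 := by
    rw [Nat.card_eq_one_iff_unique]
    exact ⟨⟨fun x y => Subtype.ext (x.2.trans y.2.symm)⟩, ⟨β, rfl⟩⟩
  rw [hcard2, hone, hcard1]
  omega

theorem comp_insert_le {B : Set G.E} (g : G.E) :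
    G.comp (insert g B) ≤ G.comp B + 1 := by
  by_cases hgB : g ∈ B
  · rw [Set.insert_eq_of_mem hgB]; omega
  by_cases h : G.Reach (insert g B) (G.fst g) (G.snd g)
  · rw [comp_insert_of_reach h]; omega
  · rw [comp_insert_of_not_reach hgB h]

theorem comp_union_le (B : Set G.E) (T : Finset G.E) :
    G.comp (B ∪ ↑T) ≤ G.comp B + T.card := by
  classical
  induction T using Finset.induction_on with
  | empty => simp
  | @insert a T ha ih =>
    rw [Finset.coe_insert, Set.union_insert]
    calc G.comp (insert a (B ∪ ↑T)) ≤ G.comp (B ∪ ↑T) + 1 := comp_insert_le a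
    _ ≤ G.comp B + T.card + 1 := by omega
    _ = G.comp B + (insert a T).card := by rw [Finset.card_insert_of_notMem ha]; omega

theorem comp_union_sep {B : Set G.E} {T : Set G.E}
    (hT : ∀ f ∈ T, f ∉ B ∧ ¬ G.Reach (insert f B) (G.fst f) (G.snd f)) :
    G.comp (B ∪ T) = G.comp B + Nat.card T := by
  classical
  revert hT
  refine Set.Finite.induction_on (motive := fun T _ => (∀ f ∈ T, f ∉ B ∧ ¬ G.Reach (insert f B) (G.fst f) (G.snd f)) → G.comp (B ∪ T) = G.comp B + Nat.card T) T (Set.toFinite T) ?_ ?_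
  · intro _; simp
  · intro f T hf hTfin ih hT
    have hfB := (hT f (Set.mem_insert f T)).1
    have hfsep := (hT f (Set.mem_insert f T)).2
    rw [Set.union_insert, comp_insert_of_not_reach, ih (fun x hx => hT x (Set.mem_insert_of_mem _ hx)),
      Nat.card_coe_set_eq, Nat.card_coe_set_eq, Set.ncard_insert_of_notMem hf hTfin]
    · omega
    · simp only [Set.mem_union, not_or]
      exact ⟨hfB, hf⟩
    · intro hc
      exact hfsep (reach_mono (Set.insert_subset_insert Set.subset_union_left) hc)

theorem comp_univ : G.comp Set.univ = Nat.card G.V := by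
  refine Nat.card_congr (Equiv.ofBijective (fun v => Quot.mk _ v) ⟨?_, ?_⟩).symm
  · intro v w h
    have h' : Relation.EqvGen (G.Rel Set.univ) v w := Quot.eq.mp h
    clear h
    induction h' with
    | rel a b h => obtain ⟨g, hg, _⟩ := h; exact absurd (Set.mem_univ g) hg
    | refl => rfl
    | symm a b _ ih => exact ih.symm
    | trans a b c _ _ ih1 ih2 => exact ih1.trans ih2
  · intro c
    obtain ⟨v, rfl⟩ := Quot.exists_rep c
    exact ⟨v, rfl⟩

theorem comp_empty_of_connected (h : G.Connected) : G.comp ∅ = 1 := by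
  rw [comp, Nat.card_eq_one_iff_unique]
  constructor
  · constructor
    intro c d
    obtain ⟨v, rfl⟩ := Quot.exists_rep c
    obtain ⟨w, rfl⟩ := Quot.exists_rep d
    refine mk_eq_iff_reach.mpr ?_
    refine Relation.ReflTransGen.mono (r := G.Adj) (p := G.Rel ∅) ?_ _ _ (h.2 v w)
    rintro x y ⟨g, hj⟩
    exact ⟨g, Set.notMem_empty g, hj⟩
  · exact ⟨Quot.mk _ h.1.some⟩

theorem reach_patch {B : Set G.E} {g : G.E} {v w : G.V}
    (h : G.Reach B v w) (hg : G.Reach (insert g B) (G.fst g) (G.snd g)) :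
    G.Reach (insert g B) v w := by
  induction h with
  | refl => exact Relation.ReflTransGen.refl
  | @tail x y hvx hxy ih =>
    obtain ⟨g', hg', hj⟩ := hxy
    by_cases hgg : g' = g
    · subst hgg
      rcases hj with ⟨h1, h2⟩ | ⟨h1, h2⟩ <;> subst h1 <;> subst h2
      · exact ih.trans hg
      · exact ih.trans hg.symm
    · exact ih.tail ⟨g', by simp [hg', hgg], hj⟩

theorem not_reach_pair_of_cycle {H : Multigraph} (hH : H.IsCycleGraph) {a b : H.E}
    (hab : a ≠ b) : ¬ H.Reach {a, b} (H.fst b) (H.snd b) := by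
  classical
  intro hr
  obtain ⟨hconn, hsep, hb1⟩ := hH
  have hins : (insert a (∅ : Set H.E)) = {a} := by simp
  have h0 : H.comp ∅ = 1 := comp_empty_of_connected hconn
  have hra : H.Reach (insert a (∅ : Set H.E)) (H.fst a) (H.snd a) := by
    rw [hins]; exact (sepEdges_empty_iff.mp hsep) a
  have h1 : H.comp {a} = 1 := by
    rw [← hins, comp_insert_of_reach hra, h0]
  have hpair : ({a, b} : Set H.E) = insert b {a} := by rw [Set.pair_comm]
  have hrb : H.Reach (insert b {a}) (H.fst b) (H.snd b) := by rw [← hpair]; exact hr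
  have h2 : H.comp {a, b} = 1 := by
    rw [hpair, comp_insert_of_reach hrb, h1]
  -- Euler inequality
  set T : Finset H.E := Finset.univ \ {a, b} with hT
  have hseteq : ({a, b} : Set H.E) ∪ ↑T = Set.univ := by
    rw [hT, Finset.coe_sdiff, Finset.coe_univ, Finset.coe_insert, Finset.coe_singleton]
    exact Set.union_diff_cancel (Set.subset_univ _)
  have hle := comp_union_le (G := H) {a, b} T
  rw [hseteq, comp_univ, h2] at hle
  have hcardT : T.card = Fintype.card H.E - 2 := by
    rw [hT, Finset.card_sdiff_of_subset (Finset.subset_univ _), Finset.card_univ]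
    congr 1
    rw [Finset.card_insert_of_notMem (by simp [hab]), Finset.card_singleton]
  have hE2 : 2 ≤ Fintype.card H.E :=
    Fintype.one_lt_card_iff_nontrivial.mpr ⟨a, b, hab⟩
  have hnc : H.numComponents = 1 := by
    rw [numComponents_eq_comp_empty, h0]
  rw [b1, hnc] at hb1
  have hEV : Nat.card H.V = Nat.card H.E := by omega
  rw [hcardT, hEV, Nat.card_eq_fintype_card] at hle
  omega

-- the core of the contraction of `G∖∅` by the complement of `S`
abbrev ctr (G : Multigraph) (S : Set G.E) : Multigraph :=
  ((G.deleteEdges ∅).contractCompl {x | x.1 ∈ S}).core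

abbrev qmk (G : Multigraph) (S : Set G.E) (v : G.V) :
    Quot ((G.deleteEdges ∅).deleteEdges {x | x.1 ∈ S}).Adj := Quot.mk _ v

def qe (G : Multigraph) (S : Set G.E) {g : G.E} (hg : g ∈ S) : (ctr G S).E :=
  ⟨⟨⟨g, Set.notMem_empty g⟩, hg⟩, Set.mem_univ _⟩

theorem qe_eq (G : Multigraph) (S : Set G.E) (y : (ctr G S).E) :
    qe G S (y.1.2 : y.1.1.1 ∈ S) = y := by
  apply Subtype.ext; apply Subtype.ext; apply Subtype.ext; rfl

theorem qe_inj (G : Multigraph) (S : Set G.E) {g g' : G.E} (hg : g ∈ S) (hg' : g' ∈ S)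
    (h : qe G S hg = qe G S hg') : g = g' :=
  congrArg (fun y => y.1.1.1) h

theorem qmk_sound (G : Multigraph) (S : Set G.E) {v w : G.V} (h : G.Rel S v w) :
    qmk G S v = qmk G S w := by
  obtain ⟨g, hg, hj⟩ := h
  exact Quot.sound ⟨⟨⟨g, Set.notMem_empty g⟩, hg⟩, hj⟩

theorem proj (G : Multigraph) (S A : Set G.E) {v w : G.V} (h : G.Reach A v w)
    (u2 : (ctr G S).V) (hu2 : u2.1 = qmk G S w) :
    ∀ u1 : (ctr G S).V, u1.1 = qmk G S v →
      (ctr G S).Reach {y | y.1.1.1 ∈ A} u1 u2 := by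
  induction h using Relation.ReflTransGen.head_induction_on with
  | refl =>
    intro u1 hu1
    have : u1 = u2 := Subtype.ext (hu1.trans hu2.symm)
    rw [this]
    exact Relation.ReflTransGen.refl
  | @head x c hstep htail ih =>
    intro u1 hu1
    obtain ⟨g, hgA, hj⟩ := hstep
    by_cases hgS : g ∈ S
    · set y : (ctr G S).E := qe G S hgS with hy
      have hyA : y ∉ {y : (ctr G S).E | y.1.1.1 ∈ A} := hgA
      rcases hj with ⟨h1, h2⟩ | ⟨h1, h2⟩
      · refine Relation.ReflTransGen.head
          (⟨y, hyA, Or.inl ⟨?_, rfl⟩⟩ : (ctr G S).Rel _ u1 ((ctr G S).snd y))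
          (ih ((ctr G S).snd y) ?_)
        · exact Subtype.ext (by rw [hu1, ← h1]; rfl)
        · show qmk G S (G.snd g) = qmk G S c
          rw [h2]
      · refine Relation.ReflTransGen.head
          (⟨y, hyA, Or.inr ⟨rfl, ?_⟩⟩ : (ctr G S).Rel _ u1 ((ctr G S).fst y))
          (ih ((ctr G S).fst y) ?_)
        · exact Subtype.ext (by rw [hu1, ← h2]; rfl)
        · show qmk G S (G.fst g) = qmk G S c
          rw [h1]
    · have hxc : qmk G S x = qmk G S c := qmk_sound G S ⟨g, hgS, hj⟩
      exact ih u1 (hu1.trans hxc)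

theorem reach_empty_iff {H : Multigraph} {v w : H.V} :
    H.Reach ∅ v w ↔ H.Reachable v w :=
  rtg_congr (fun v w =>
    ⟨fun ⟨g, _, hj⟩ => ⟨g, hj⟩, fun ⟨g, hj⟩ => ⟨g, Set.notMem_empty g, hj⟩⟩)

theorem ctr_connected {G : Multigraph} (S : Set G.E) (hconn : G.Connected)
    {g₀ : G.E} (hg₀ : g₀ ∈ S) : (ctr G S).Connected := by
  constructor
  · exact ⟨(ctr G S).fst (qe G S hg₀)⟩
  · intro u1 u2
    obtain ⟨v, hv⟩ := Quot.exists_rep u1.1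
    obtain ⟨w, hw⟩ := Quot.exists_rep u2.1
    have hr : G.Reach ∅ v w := reach_empty_iff.mpr (hconn.2 v w)
    have := proj G S ∅ hr u2 hw.symm u1 hv.symm
    refine reach_empty_iff.mp ?_
    have hset : {y : (ctr G S).E | y.1.1.1 ∈ (∅ : Set G.E)} = ∅ := by
      ext y; simp
    rw [hset] at this
    exact this
theorem ctr_sepEdges_empty {G : Multigraph} (S : Set G.E)
    (hsep' : ∀ g : G.E, G.Reach {g} (G.fst g) (G.snd g)) :
    (ctr G S).sepEdges = ∅ := by
  rw [sepEdges_empty_iff]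
  intro y
  set g := y.1.1.1 with hg
  have hgS : g ∈ S := y.1.2
  have hr : G.Reach {g} (G.fst g) (G.snd g) := hsep' g
  have hyqe : qe G S hgS = y := qe_eq G S y
  have hproj := proj G S {g} hr ((ctr G S).snd (qe G S hgS)) rfl
    ((ctr G S).fst (qe G S hgS)) rfl
  have hset : {y' : (ctr G S).E | y'.1.1.1 ∈ ({g} : Set G.E)} = {y} := by
    ext y'
    simp only [Set.mem_setOf_eq, Set.mem_singleton_iff]
    constructor
    · intro h
      rw [← qe_eq G S y', ← hyqe]
      apply Subtype.ext; apply Subtype.ext; apply Subtype.ext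
      exact h
    · intro h; rw [h]
  rw [hset, hyqe] at hproj
  exact hproj

theorem card_ctr_E {G : Multigraph} (S : Set G.E) :
    Nat.card (ctr G S).E = Nat.card ↥S :=
  Nat.card_congr
    { toFun := fun y => ⟨y.1.1.1, y.1.2⟩
      invFun := fun s => qe G S s.2
      left_inv := fun y => qe_eq G S y
      right_inv := fun s => rfl }

theorem card_ctr_V {G : Multigraph} (S : Set G.E) (hconn : G.Connected)
    {g₀ : G.E} (hg₀ : g₀ ∈ S) : Nat.card (ctr G S).V = G.comp S := by
  have hincident : ∀ q : ((G.deleteEdges ∅).contractCompl {x | x.1 ∈ S}).V,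
      ∃ x ∈ (Set.univ : Set ((G.deleteEdges ∅).contractCompl {x | x.1 ∈ S}).E),
        ((G.deleteEdges ∅).contractCompl {x | x.1 ∈ S}).fst x = q ∨
        ((G.deleteEdges ∅).contractCompl {x | x.1 ∈ S}).snd x = q := by
    intro q
    obtain ⟨u, hu⟩ := Quot.exists_rep q
    have hru : G.Reach ∅ u (G.fst g₀) := reach_empty_iff.mpr (hconn.2 u (G.fst g₀))
    have key : ∀ u', G.Reach ∅ u' (G.fst g₀) →
        ∃ g, ∃ hg : g ∈ S, qmk G S (G.fst g) = qmk G S u' ∨ qmk G S (G.snd g) = qmk G S u' := by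
      intro u' h
      induction h using Relation.ReflTransGen.head_induction_on with
      | refl => exact ⟨g₀, hg₀, Or.inl rfl⟩
      | @head x c hstep htail ih =>
        obtain ⟨g, _, hj⟩ := hstep
        by_cases hgS : g ∈ S
        · rcases hj with ⟨h1, h2⟩ | ⟨h1, h2⟩
          · exact ⟨g, hgS, Or.inl (by rw [h1])⟩
          · exact ⟨g, hgS, Or.inr (by rw [h2])⟩
        · obtain ⟨g', hg', hor⟩ := ih
          have hxc : qmk G S x = qmk G S c := qmk_sound G S ⟨g, hgS, hj⟩
          exact ⟨g', hg', by rw [hxc]; exact hor⟩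
    obtain ⟨g, hg, hor⟩ := key u hru
    refine ⟨(qe G S hg).1, Set.mem_univ _, ?_⟩
    rcases hor with h | h
    · exact Or.inl (by rw [← hu]; exact h)
    · exact Or.inr (by rw [← hu]; exact h)
  have h1 : Nat.card (ctr G S).V =
      Nat.card ((G.deleteEdges ∅).contractCompl {x | x.1 ∈ S}).V :=
    Nat.card_congr (Equiv.subtypeUnivEquiv hincident)
  rw [h1]
  exact card_quot_eq _ _
    (fun v w h => Quot.sound ((rel_deleteEdges_setOf (B := ∅)).mp (adj_deleteEdges.mp h)
      |> fun ⟨g, hg, hj⟩ => ⟨g, fun hh => hg (Set.mem_union_right _ hh), hj⟩))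
    (fun v w h => Quot.sound (adj_deleteEdges.mpr (rel_deleteEdges_setOf.mpr
      (h |> fun ⟨g, hg, hj⟩ => ⟨g, by simp [hg], hj⟩))))

theorem insert_subtype_eq (G : Multigraph) (x : (G.deleteEdges (∅ : Set G.E)).E)
    (S : Set G.E) :
    (insert x {z : (G.deleteEdges (∅ : Set G.E)).E | z.1 ∈ S}) = {z | z.1 ∈ insert x.1 S} := by
  ext z
  simp only [Set.mem_insert_iff, Set.mem_setOf_eq]
  exact or_congr Subtype.ext_iff Iff.rfl

theorem cond3_iff (G : Multigraph) (S : Set G.E) :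
    ((G.deleteEdges ∅).deleteEdges {x | x.1 ∈ S}).sepEdges = ∅ ↔
      ∀ g ∉ S, G.Reach (insert g S) (G.fst g) (G.snd g) := by
  rw [sepEdges_deleteEdges_empty_iff]
  constructor
  · intro h g hg
    have := h ⟨g, Set.notMem_empty g⟩ hg
    have h' := (congrArg (fun T => (G.deleteEdges ∅).Reach T ((G.deleteEdges ∅).fst ⟨g, Set.notMem_empty g⟩)
      ((G.deleteEdges ∅).snd ⟨g, Set.notMem_empty g⟩)) (insert_subtype_eq G ⟨g, Set.notMem_empty g⟩ S)).mp this
    have := reach_deleteEdges_setOf.mp h'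
    rw [Set.empty_union] at this
    exact this
  · intro h x hx
    rw [insert_subtype_eq]
    exact reach_deleteEdges_setOf.mpr (by rw [Set.empty_union]; exact h x.1 hx)

theorem isC1_iff {G : Multigraph} (hsep : G.sepEdges = ∅) (S : Set G.E) :
    G.IsC1 S ↔ (∀ e ∈ S, ¬ G.IsSeparating e) ∧ (ctr G S).IsCycleGraph ∧
      (∀ g ∉ S, G.Reach (insert g S) (G.fst g) (G.snd g)) := by
  unfold IsC1
  rw [hsep, cond3_iff]

def sepDel (G : Multigraph) (e : G.E) : Set G.E :=
  {f | f ≠ e ∧ ¬ G.Reach {f, e} (G.fst f) (G.snd f)}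

theorem sepDel_eq (G : Multigraph) (e : G.E) :
    {f : G.E | ∃ h : f ∉ ({e} : Set G.E), (G.deleteEdges {e}).IsSeparating ⟨f, h⟩} =
      sepDel G e := by
  ext f
  simp only [Set.mem_setOf_eq, sepDel]
  constructor
  · rintro ⟨h, hf⟩
    exact ⟨h, (isSeparating_deleteEdges (B := {e}) ⟨f, h⟩).mp hf⟩
  · rintro ⟨h, hf⟩
    exact ⟨h, (isSeparating_deleteEdges (B := {e}) ⟨f, h⟩).mpr hf⟩

theorem stepA {G : Multigraph} {e g : G.E} (hge : g ≠ e)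
    (hgr : G.Reach {g, e} (G.fst g) (G.snd g)) (hgS : g ∉ sepDel G e) :
    ∀ T : Set G.E, T ⊆ sepDel G e → G.Reach ({g, e} ∪ T) (G.fst g) (G.snd g) := by
  intro T
  refine Set.Finite.induction_on
    (motive := fun T _ => T ⊆ sepDel G e → G.Reach ({g, e} ∪ T) (G.fst g) (G.snd g))
    T (Set.toFinite T) ?_ ?_
  · intro _
    rw [Set.union_empty]
    exact hgr
  · intro f T hfT hTfin ih hsub
    obtain ⟨hfe, hfsep⟩ := hsub (Set.mem_insert f T)
    have hr := ih (fun x hx => hsub (Set.mem_insert_of_mem _ hx))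
    rw [Set.union_insert]
    have hfg : f ≠ g := fun hh => hgS (hh ▸ hsub (Set.mem_insert f T))
    have hgmem : g ∉ ({f, e} : Set G.E) := by
      simp only [Set.mem_insert_iff, Set.mem_singleton_iff, not_or]
      exact ⟨fun h => hfg h.symm, hge⟩
    have hsub2 : ({f, e} : Set G.E) ⊆ insert f ({g, e} ∪ T) := by
      rintro x (rfl | hx)
      · exact Set.mem_insert x _
      · exact Set.mem_insert_of_mem _ (Set.mem_union_left _ (Set.mem_insert_of_mem _ hx))
    have hstepg : G.Rel {f, e} (G.fst g) (G.snd g) := ⟨g, hgmem, Or.inl ⟨rfl, rfl⟩⟩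
    rcases reach_split (g := f) hr with h | ⟨h3, h4⟩ | ⟨h3, h4⟩
    · exact h
    · exact absurd ((reach_mono hsub2 h3.symm).trans
        ((Relation.ReflTransGen.single hstepg).trans (reach_mono hsub2 h4.symm))) hfsep
    · exact absurd ((reach_mono hsub2 h4).trans
        ((Relation.ReflTransGen.single ⟨g, hgmem, Or.inr ⟨rfl, rfl⟩⟩).trans
          (reach_mono hsub2 h3))) hfsep

theorem eq_qe {G : Multigraph} {S : Set G.E} (y : (ctr G S).E) {g : G.E} (hg : g ∈ S)
    (h : y.1.1.1 = g) : y = qe G S hg := by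
  subst h
  exact (qe_eq G S y).symm


end Framework

end Multigraph

open Multigraph

/-- For a connected graph with no separating edges and an edge `e`,
the set `Sₑ = E(Γ∖e)_sep ∪ {e}` is the unique C1-set containing `e`. -/
theorem isC1_sepEdges_deleteEdges_union_self (G : Multigraph)
    (hconn : G.Connected) (hsep : G.sepEdges = ∅) (e : G.E) :
    G.IsC1 (insert e {f : G.E | ∃ h : f ∉ ({e} : Set G.E),
      (G.deleteEdges {e}).IsSeparating ⟨f, h⟩}) ∧
    ∀ S : Set G.E, G.IsC1 S → e ∈ S →
      S = insert e {f : G.E | ∃ h : f ∉ ({e} : Set G.E),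
        (G.deleteEdges {e}).IsSeparating ⟨f, h⟩} := by
  have hsep' : ∀ g : G.E, G.Reach {g} (G.fst g) (G.snd g) := sepEdges_empty_iff.mp hsep
  rw [sepDel_eq G e]
  set Se : Set G.E := insert e (sepDel G e) with hSe
  have heSe : e ∈ Se := Set.mem_insert e _
  have he_not : e ∉ sepDel G e := fun h => h.1 rfl
  have hmem : ∀ f, f ≠ e → (f ∈ Se ↔ ¬ G.Reach {f, e} (G.fst f) (G.snd f)) := by
    intro f hf
    simp [hSe, Set.mem_insert_iff, hf, sepDel, Set.mem_setOf_eq]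
  have hA : ∀ g ∉ Se, G.Reach (insert g Se) (G.fst g) (G.snd g) := by
    intro g hg
    have hge : g ≠ e := fun h => hg (h ▸ heSe)
    have hgS : g ∉ sepDel G e := fun h => hg (Set.mem_insert_of_mem _ h)
    have hgr : G.Reach {g, e} (G.fst g) (G.snd g) := by
      by_contra hc
      exact hg ((hmem g hge).mpr hc)
    have h2 := stepA hge hgr hgS (sepDel G e) subset_rfl
    have hset : ({g, e} : Set G.E) ∪ sepDel G e = insert g Se := by
      rw [hSe, Set.insert_union, Set.singleton_union]
    rwa [hset] at h2
  have h0 : G.comp ∅ = 1 := comp_empty_of_connected hconn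
  have hins_e : insert e (∅ : Set G.E) = {e} := by simp
  have hce : G.comp {e} = 1 := by
    rw [← hins_e, comp_insert_of_reach (by rw [hins_e]; exact hsep' e), h0]
  have hcomp_Se : G.comp Se = 1 + Nat.card (sepDel G e) := by
    have h1 : Se = {e} ∪ sepDel G e := by rw [Set.singleton_union]
    rw [h1, comp_union_sep, hce]
    rintro f ⟨hfe, hfsep⟩
    exact ⟨by simpa using hfe, hfsep⟩
  have hcard_Se : Nat.card ↥Se = Nat.card ↥(sepDel G e) + 1 := by
    rw [hSe, Nat.card_coe_set_eq, Nat.card_coe_set_eq,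
      Set.ncard_insert_of_notMem he_not]
  have hcyc : (ctr G Se).IsCycleGraph := by
    refine ⟨ctr_connected Se hconn heSe, ctr_sepEdges_empty Se hsep', ?_⟩
    have hnc : (ctr G Se).numComponents = 1 := by
      rw [numComponents_eq_comp_empty, comp_empty_of_connected (ctr_connected Se hconn heSe)]
    rw [b1, hnc, card_ctr_E, card_ctr_V Se hconn heSe, hcomp_Se, hcard_Se]
    push_cast
    ring
  constructor
  · rw [isC1_iff hsep]
    refine ⟨?_, hcyc, hA⟩
    intro f _ hf
    rw [Set.eq_empty_iff_forall_notMem] at hsep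
    exact hsep f hf
  · intro S hS heS
    rw [isC1_iff hsep] at hS
    obtain ⟨hS1, hS2, hS3⟩ := hS
    apply Set.Subset.antisymm
    · intro f hfS
      by_cases hfe : f = e
      · exact hfe ▸ heSe
      refine (hmem f hfe).mpr ?_
      intro hr
      have hef : (qe G S heS) ≠ (qe G S hfS) := fun h => hfe (qe_inj G S heS hfS h).symm
      refine not_reach_pair_of_cycle hS2 hef ?_
      rw [Set.pair_comm f e] at hr
      have hproj := proj G S {e, f} hr ((ctr G S).snd (qe G S hfS)) rfl
        ((ctr G S).fst (qe G S hfS)) rfl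
      have hset : {y : (ctr G S).E | y.1.1.1 ∈ ({e, f} : Set G.E)} =
          {qe G S heS, qe G S hfS} := by
        ext y
        simp only [Set.mem_setOf_eq, Set.mem_insert_iff, Set.mem_singleton_iff]
        constructor
        · rintro (h | h)
          · exact Or.inl (eq_qe y heS h)
          · exact Or.inr (eq_qe y hfS h)
        · rintro (rfl | rfl)
          · exact Or.inl rfl
          · exact Or.inr rfl
      rwa [hset] at hproj
    · intro f hf
      rcases Set.mem_insert_iff.mp hf with rfl | hf'
      · exact heS
      by_contra hfS
      have h2 := hS3 f hfS
      apply hf'.2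
      refine reach_mono ?_ h2
      rintro x (rfl | hx)
      · exact Set.mem_insert x S
      · rw [Set.mem_singleton_iff] at hx
        subst hx
        exact Set.mem_insert_of_mem _ heS
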